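/- Let $\mathbf{M} \in \mathbb{R}^{m \times m}$ be symmetric positive definite with factorization $\mathbf{M} = \sqrt{\mathbf{M}}\sqrt{\mathbf{M}}^\top$, let $\boldsymbol{\Sigma} = (\sqrt{\mathbf{M}})^{-\top} f(\mathbf{S}) (\sqrt{\mathbf{M}})^{-1}$ where $\mathbf{S}$ and $f(\mathbf{S})$ are as above with $\ker \mathbf{S} = \mathrm{span}(\mathbf{v}_1)$ one-dimensional, $\|\mathbf{v}_1\| = 1$. Let $\boldsymbol{\phi}_0 = (\sqrt{\mathbf{M}})^{-\top} \mathbf{v}_1$. Then for all $\alpha > 0$, the matrix $\tilde{\boldsymbol{\Sigma}}_\alpha = \boldsymbol{\Sigma} + \alpha \boldsymbol{\phi}_0 \boldsymbol{\phi}_0^\top$ is invertible with inverse $\tilde{\mathbf{Q}}_\alpha = \sqrt{\mathbf{M}} \mathbf{S}^2 \sqrt{\mathbf{M}}^\top + \frac{1}{\alpha} (\mathbf{M} \boldsymbol{\phi}_0)(\mathbf{M} \boldsymbol{\phi}_0)^\top$. -/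
import Mathlib


open Matrix

/-- Proposition 4.2, general form: with `Σ = √M⁻ᵀ f(S) √M⁻¹`,
`ker S = span(v₁)` one-dimensional (`v₁` the unit first column of the
eigenbasis `V`), and `φ₀ = √M⁻ᵀ v₁`, the matrix
`Σ̃_α = Σ + α φ₀φ₀ᵀ` is invertible with inverse
`Q̃_α = √M S² √Mᵀ + α⁻¹ (Mφ₀)(Mφ₀)ᵀ`. -/
theorem stmt5 (m : ℕ) (M sqM : Matrix (Fin (m + 1)) (Fin (m + 1)) ℝ)
    (hM : M.PosDef) (hfac : M = sqM * sqMᵀ) (hinv : IsUnit sqM.det)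
    (V : Matrix (Fin (m + 1)) (Fin (m + 1)) ℝ) (hV : Vᵀ * V = 1)
    (d : Fin (m + 1) → ℝ) (hd0 : d 0 = 0) (hdpos : ∀ k, k ≠ 0 → 0 < d k)
    (S fS : Matrix (Fin (m + 1)) (Fin (m + 1)) ℝ)
    (hS : S = V * diagonal d * Vᵀ)
    (hfS : fS = V * diagonal (fun k => if d k = 0 then 0 else ((d k) ^ 2)⁻¹) * Vᵀ)
    (v1 : Fin (m + 1) → ℝ) (hv1 : v1 = fun i => V i 0)
    (Sig : Matrix (Fin (m + 1)) (Fin (m + 1)) ℝ)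
    (hSig : Sig = (sqM⁻¹)ᵀ * fS * sqM⁻¹)
    (φ0 : Fin (m + 1) → ℝ) (hφ0 : φ0 = (sqM⁻¹)ᵀ *ᵥ v1)
    (α : ℝ) (hα : 0 < α) :
    (Sig + α • vecMulVec φ0 φ0) *
        (sqM * S ^ 2 * sqMᵀ + α⁻¹ • vecMulVec (M *ᵥ φ0) (M *ᵥ φ0)) = 1 ∧
      (sqM * S ^ 2 * sqMᵀ + α⁻¹ • vecMulVec (M *ᵥ φ0) (M *ᵥ φ0)) *
        (Sig + α • vecMulVec φ0 φ0) = 1 := by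
  have hVV : V * Vᵀ = 1 := mul_eq_one_comm.mp hV
  have hsq1 : sqM * sqM⁻¹ = 1 := mul_nonsing_inv _ hinv
  have hsq2 : sqM⁻¹ * sqM = 1 := nonsing_inv_mul _ hinv
  have key : ∀ (B C : Matrix (Fin (m+1)) (Fin (m+1)) ℝ) (x y : Fin (m+1) → ℝ),
      vecMulVec (B *ᵥ x) (C *ᵥ y) = B * vecMulVec x y * Cᵀ := by
    intro B C x y
    ext i j
    simp only [vecMulVec_apply, mulVec, dotProduct, mul_apply, transpose_apply,
      Finset.sum_mul, Finset.mul_sum]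
    apply Finset.sum_congr rfl; intro k _
    apply Finset.sum_congr rfl; intro l _
    ring
  set e : Fin (m+1) → ℝ := fun k => if k = 0 then (1:ℝ) else 0 with he
  have hP : vecMulVec v1 v1 = V * diagonal e * Vᵀ := by
    ext i j
    simp [vecMulVec_apply, hv1, mul_apply, diagonal, transpose_apply, he,
      mul_ite, mul_zero, mul_one, ite_mul, zero_mul, Finset.sum_ite_eq, Finset.sum_ite_eq']
  have hMφ : M *ᵥ φ0 = sqM *ᵥ v1 := by
    rw [hφ0, hfac, mulVec_mulVec]
    congr 1
    rw [mul_assoc, ← transpose_mul, hsq2, transpose_one, mul_one]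
  have conjmul : ∀ a b : Fin (m+1) → ℝ,
      (V * diagonal a * Vᵀ) * (V * diagonal b * Vᵀ)
        = V * diagonal (fun k => a k * b k) * Vᵀ := by
    intro a b
    have h1 : (V * diagonal a * Vᵀ) * (V * diagonal b * Vᵀ)
        = V * (diagonal a * (Vᵀ * V) * diagonal b) * Vᵀ := by
      simp only [mul_assoc]
    rw [h1, hV, mul_one, diagonal_mul_diagonal]
  have hsmul : ∀ (r : ℝ) (a : Fin (m+1) → ℝ),
      r • (V * diagonal a * Vᵀ) = V * diagonal (r • a) * Vᵀ := by
    intro r a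
    rw [diagonal_smul, Matrix.mul_smul, Matrix.smul_mul]
  have hadd : ∀ a b : Fin (m+1) → ℝ,
      V * diagonal a * Vᵀ + V * diagonal b * Vᵀ = V * diagonal (a + b) * Vᵀ := by
    intro a b
    have hd : Matrix.diagonal (a + b) = diagonal a + diagonal b := by
      ext i j
      rcases eq_or_ne i j with h | h <;> simp [Matrix.diagonal_apply, h]
    rw [hd, mul_add, add_mul]
  have hS2 : S ^ 2 = V * diagonal (fun k => d k * d k) * Vᵀ := by
    rw [hS, sq, conjmul]
  have g1g2 : ∀ k, ((if d k = 0 then 0 else ((d k) ^ 2)⁻¹) + α * e k)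
      * (d k * d k + α⁻¹ * e k) = 1 := by
    intro k
    by_cases hk : k = 0
    · subst hk
      simp [he, hd0, mul_inv_cancel₀ hα.ne']
    · have hdk := (hdpos k hk).ne'
      simp only [he, hk, if_neg hk, if_neg hdk, mul_zero, add_zero, sq]
      field_simp
  have hmid : (fS + α • (V * diagonal e * Vᵀ)) * (S ^ 2 + α⁻¹ • (V * diagonal e * Vᵀ)) = 1 := by
    rw [hfS, hS2, hsmul, hsmul, hadd, hadd, conjmul]
    have h2 : (fun k => ((fun k => if d k = 0 then 0 else ((d k) ^ 2)⁻¹) + α • e) k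
        * ((fun k => d k * d k) + α⁻¹ • e) k) = fun _ => (1:ℝ) := by
      funext k
      simpa [Pi.add_apply, Pi.smul_apply, smul_eq_mul] using g1g2 k
    rw [h2, diagonal_one, mul_one, hVV]
  have hmid' : (S ^ 2 + α⁻¹ • (V * diagonal e * Vᵀ)) * (fS + α • (V * diagonal e * Vᵀ)) = 1 := by
    rw [hfS, hS2, hsmul, hsmul, hadd, hadd, conjmul]
    have h2 : (fun k => ((fun k => d k * d k) + α⁻¹ • e) k
        * ((fun k => if d k = 0 then 0 else ((d k) ^ 2)⁻¹) + α • e) k) = fun _ => (1:ℝ) := by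
      funext k
      rw [mul_comm]
      simpa [Pi.add_apply, Pi.smul_apply, smul_eq_mul] using g1g2 k
    rw [h2, diagonal_one, mul_one, hVV]
  have hSt : Sig + α • vecMulVec φ0 φ0
      = (sqM⁻¹)ᵀ * (fS + α • (V * diagonal e * Vᵀ)) * sqM⁻¹ := by
    rw [hSig, hφ0, key, hP, transpose_transpose, mul_add, add_mul]
    congr 1
    rw [Matrix.mul_smul, Matrix.smul_mul]
  have hQt : sqM * S ^ 2 * sqMᵀ + α⁻¹ • vecMulVec (M *ᵥ φ0) (M *ᵥ φ0)
      = sqM * (S ^ 2 + α⁻¹ • (V * diagonal e * Vᵀ)) * sqMᵀ := by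
    rw [hMφ, key, hP, mul_add, add_mul]
    congr 1
    rw [Matrix.mul_smul, Matrix.smul_mul]
  set F := fS + α • (V * diagonal e * Vᵀ) with hF
  set G := S ^ 2 + α⁻¹ • (V * diagonal e * Vᵀ) with hG
  constructor
  · rw [hSt, hQt]
    calc (sqM⁻¹)ᵀ * F * sqM⁻¹ * (sqM * G * sqMᵀ)
        = (sqM⁻¹)ᵀ * (F * ((sqM⁻¹ * sqM) * (G * sqMᵀ))) := by simp only [mul_assoc]
      _ = (sqM⁻¹)ᵀ * (F * (G * sqMᵀ)) := by rw [hsq2, one_mul]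
      _ = (sqM⁻¹)ᵀ * ((F * G) * sqMᵀ) := by rw [mul_assoc]
      _ = (sqM⁻¹)ᵀ * sqMᵀ := by rw [hmid, one_mul]
      _ = 1 := by rw [← transpose_mul, hsq1, transpose_one]
  · rw [hSt, hQt]
    calc sqM * G * sqMᵀ * ((sqM⁻¹)ᵀ * F * sqM⁻¹)
        = sqM * (G * ((sqMᵀ * (sqM⁻¹)ᵀ) * (F * sqM⁻¹))) := by simp only [mul_assoc]
      _ = sqM * (G * (F * sqM⁻¹)) := by
          rw [← transpose_mul, hsq2, transpose_one, one_mul]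
      _ = sqM * ((G * F) * sqM⁻¹) := by rw [mul_assoc]
      _ = sqM * sqM⁻¹ := by rw [hmid', one_mul]
      _ = 1 := hsq1
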